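/- arXiv:2211.13259 — 2 statements merged into one kernel-verified Lean document; each statement's English description precedes it below -/
import Mathlib

section
/- Let T be a type, let (A i)_{i ∈ ℕ} be a decreasing (with respect to set inclusion) sequence of subsets of T, and define a reward function r : T → ℝ by r t = 0 if t ∈ A i for all i, r t = -2^(-i) if i is the maximum index with t ∈ A i (i.e. t ∈ A i and t ∉ A (i+1)), and r t = -1 if t ∉ A 0. Then for every sequence e : ℕ → T, the set {n | e n ∈ A i} is infinite for every i ∈ ℕ if and only if limsup_{n} r (e n) ≥ 0. -/
/-! The reward `r t` is at least `-2⁻ⁱ` when `t ∈ A i` and at most `-2⁻ⁱ` when `t ∉ A i`.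
Hence visiting every `A i` infinitely often pushes the limsup above every `-2⁻ⁱ`, so to `0`,
while eventually avoiding some `A i` keeps it below `-2⁻ⁱ < 0`. -/

open Filter Topology

section RealSequences

variable {α : Type*} {l : Filter α} {u : α → ℝ}

theorem tendsto_neg_two_zpow_neg_atTop :
    Tendsto (fun i : ℕ => -(2 : ℝ) ^ (-(i : ℤ))) atTop (𝓝 0) := by
  have h : Tendsto (fun i : ℕ => ((2 : ℝ) ^ i)⁻¹) atTop (𝓝 0) :=
    tendsto_inv_atTop_zero.comp (tendsto_pow_atTop_atTop_of_one_lt one_lt_two)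
  simpa [zpow_neg, zpow_natCast] using h.neg

theorem limsup_nonneg_of_frequently_neg_two_zpow_le
    (hbdd : IsBoundedUnder (· ≤ ·) l u)
    (h : ∀ i : ℕ, ∃ᶠ n in l, -(2 : ℝ) ^ (-(i : ℤ)) ≤ u n) : 0 ≤ limsup u l :=
  le_of_tendsto' tendsto_neg_two_zpow_neg_atTop fun i => le_limsup_of_frequently_le (h i) hbdd

theorem limsup_neg_of_eventually_le_neg [l.NeBot] (hbdd : IsBoundedUnder (· ≥ ·) l u)
    {c : ℝ} (hc : 0 < c) (h : ∀ᶠ n in l, u n ≤ -c) : limsup u l < 0 :=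
  (limsup_le_of_le hbdd.isCoboundedUnder_le h).trans_lt (neg_lt_zero.2 hc)

end RealSequences

section NestedSets

variable {T : Type*} {A : ℕ → Set T} {t : T}

theorem exists_lt_mem_notMem_succ (h0 : t ∈ A 0) {i : ℕ} (hi : t ∉ A i) :
    ∃ k < i, t ∈ A k ∧ t ∉ A (k + 1) := by
  induction i with
  | zero => exact absurd h0 hi
  | succ i ih =>
    by_cases hti : t ∈ A i
    · exact ⟨i, i.lt_succ_self, hti, hi⟩
    · obtain ⟨k, hk, hmem⟩ := ih hti
      exact ⟨k, hk.trans i.lt_succ_self, hmem⟩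

theorem neg_two_zpow_neg_le_of_le {k i : ℕ} (h : k ≤ i) :
    -(2 : ℝ) ^ (-(k : ℤ)) ≤ -(2 : ℝ) ^ (-(i : ℤ)) :=
  neg_le_neg (zpow_le_zpow_right₀ one_le_two (by omega))

variable {r : T → ℝ}

theorem reward_le_of_notMem
    (hri : ∀ t i, t ∈ A i → t ∉ A (i + 1) → r t = -(2:ℝ) ^ (-(i:ℤ)))
    (hrneg : ∀ t, t ∉ A 0 → r t = -1) {i : ℕ} (ht : t ∉ A i) :
    r t ≤ -(2 : ℝ) ^ (-(i : ℤ)) := by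
  by_cases h0 : t ∈ A 0
  · obtain ⟨k, hki, hk, hk1⟩ := exists_lt_mem_notMem_succ h0 ht
    rw [hri t k hk hk1]
    exact neg_two_zpow_neg_le_of_le hki.le
  · simpa [hrneg t h0] using neg_two_zpow_neg_le_of_le (Nat.zero_le i)

theorem neg_le_reward_of_mem (hA : Antitone A)
    (hr0 : ∀ t, (∀ i, t ∈ A i) → r t = 0)
    (hri : ∀ t i, t ∈ A i → t ∉ A (i + 1) → r t = -(2:ℝ) ^ (-(i:ℤ))) {i : ℕ} (ht : t ∈ A i) :
    -(2 : ℝ) ^ (-(i : ℤ)) ≤ r t := by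
  by_cases hall : ∀ j, t ∈ A j
  · rw [hr0 t hall]
    exact neg_nonpos.2 (by positivity)
  · obtain ⟨j, hj⟩ := not_forall.1 hall
    obtain ⟨k, -, hk, hk1⟩ := exists_lt_mem_notMem_succ (hA (Nat.zero_le i) ht) hj
    have hik : i ≤ k := by
      by_contra hki
      exact hk1 (hA (by omega) ht)
    rw [hri t k hk hk1]
    exact neg_two_zpow_neg_le_of_le hik

theorem reward_nonpos (hr0 : ∀ t, (∀ i, t ∈ A i) → r t = 0)
    (hri : ∀ t i, t ∈ A i → t ∉ A (i + 1) → r t = -(2:ℝ) ^ (-(i:ℤ)))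
    (hrneg : ∀ t, t ∉ A 0 → r t = -1) (t : T) : r t ≤ 0 := by
  by_cases hall : ∀ j, t ∈ A j
  · exact (hr0 t hall).le
  · obtain ⟨j, hj⟩ := not_forall.1 hall
    exact (reward_le_of_notMem hri hrneg hj).trans (neg_nonpos.2 (by positivity))

theorem neg_one_le_reward (hA : Antitone A) (hr0 : ∀ t, (∀ i, t ∈ A i) → r t = 0)
    (hri : ∀ t i, t ∈ A i → t ∉ A (i + 1) → r t = -(2:ℝ) ^ (-(i:ℤ)))
    (hrneg : ∀ t, t ∉ A 0 → r t = -1) (t : T) : -1 ≤ r t := by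
  by_cases h0 : t ∈ A 0
  · simpa using neg_le_reward_of_mem hA hr0 hri h0
  · exact (hrneg t h0).ge

end NestedSets

theorem nestedBuchi_iff_limsup {T : Type*} (A : ℕ → Set T)
    (hA : ∀ i, A (i + 1) ⊆ A i) (r : T → ℝ)
    (hr0 : ∀ t, (∀ i, t ∈ A i) → r t = 0)
    (hri : ∀ t i, t ∈ A i → t ∉ A (i + 1) → r t = -(2:ℝ) ^ (-(i:ℤ)))
    (hrneg : ∀ t, t ∉ A 0 → r t = -1)
    (e : ℕ → T) :
    (∀ i : ℕ, {n : ℕ | e n ∈ A i}.Infinite) ↔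
      Filter.limsup (fun n => r (e n)) Filter.atTop ≥ 0 := by
  have hanti : Antitone A := antitone_nat_of_succ_le hA
  have hbddAbove : IsBoundedUnder (· ≤ ·) atTop (fun n => r (e n)) :=
    isBoundedUnder_of ⟨0, fun n => reward_nonpos hr0 hri hrneg (e n)⟩
  have hbddBelow : IsBoundedUnder (· ≥ ·) atTop (fun n => r (e n)) :=
    isBoundedUnder_of ⟨-1, fun n => neg_one_le_reward hanti hr0 hri hrneg (e n)⟩
  constructor
  · intro hinf
    exact limsup_nonneg_of_frequently_neg_two_zpow_le hbddAbove fun i =>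
      (Nat.frequently_atTop_iff_infinite.2 (hinf i)).mono fun n =>
        neg_le_reward_of_mem hanti hr0 hri
  · intro hlim
    by_contra! hfin
    obtain ⟨i, hi⟩ := hfin
    have hev : ∀ᶠ n in atTop, e n ∉ A i := by
      rw [← Nat.cofinite_eq_atTop]
      exact hi.eventually_cofinite_notMem
    exact (limsup_neg_of_eventually_le_neg hbddBelow (by positivity)
      (hev.mono fun n => reward_le_of_notMem hri hrneg)).not_ge hlim
end

section
/- Let T be a countable type, (A i)_{i ∈ ℕ} a decreasing sequence of subsets of T, and (F i)_{i ∈ ℕ} a sequence of finite subsets of T with F i ⊆ A i for every i. Let x : ℕ → T be a sequence such that (1) the set {n | x n ∈ ⋃_i F i} is infinite, and (2) for every t ∈ T the set {n | x n = t} is finite. Then for every i ∈ ℕ the set {n | x n ∈ A i} is infinite. -/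
/-!
Every `F j` with `j ≥ i` lies in `A j ⊆ A i`, so a visit to `⋃ j, F j` outside `A i` is a visit to
the finite set `⋃ j < i, F j`. Since each point is visited only finitely often, there are only
finitely many such visits, and the infinitely many visits to `⋃ j, F j` are almost all in `A i`.
-/

theorem Set.iUnion_subset_biUnion_lt_union_of_antitone {α : Type*} {A F : ℕ → Set α}
    (hA : Antitone A) (hFA : ∀ j, F j ⊆ A j) (i : ℕ) :
    ⋃ j, F j ⊆ (⋃ j < i, F j) ∪ A i := by
  refine Set.iUnion_subset fun j => ?_
  rcases lt_or_ge j i with hji | hij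
  · exact Set.subset_union_of_subset_left (Set.subset_iUnion₂ (s := fun j (_ : j < i) => F j) j hji) _
  · exact Set.subset_union_of_subset_right ((hFA j).trans (hA hij)) _

theorem Set.Infinite.preimage_of_union_finite {α β : Type*} {f : α → β} {s t : Set β}
    (h : (f ⁻¹' (s ∪ t)).Infinite) (hs : s.Finite) (hf : ∀ b, (f ⁻¹' {b}).Finite) :
    (f ⁻¹' t).Infinite := by
  rw [Set.preimage_union, Set.infinite_union] at h
  exact h.resolve_left (hs.preimage' fun b _ => hf b).not_infinite

theorem infinite_visits_of_good_general {T : Type*}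
    (A : ℕ → Set T) (hA : ∀ i, A (i + 1) ⊆ A i)
    (F : ℕ → Set T) (hFfin : ∀ i, (F i).Finite) (hFA : ∀ i, F i ⊆ A i)
    (x : ℕ → T)
    (h1 : {n : ℕ | x n ∈ ⋃ i : ℕ, F i}.Infinite)
    (h2 : ∀ t : T, {n : ℕ | x n = t}.Finite) :
    ∀ i : ℕ, {n : ℕ | x n ∈ A i}.Infinite := by
  intro i
  have hcover := Set.iUnion_subset_biUnion_lt_union_of_antitone (antitone_nat_of_succ_le hA) hFA i
  have hfin : (⋃ j < i, F j).Finite := (Set.finite_lt_nat i).biUnion fun j _ => hFfin j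
  exact (h1.mono (Set.preimage_mono hcover)).preimage_of_union_finite hfin h2

theorem infinite_visits_of_good {T : Type*} [Countable T]
    (A : ℕ → Set T) (hA : ∀ i, A (i + 1) ⊆ A i)
    (F : ℕ → Set T) (hFfin : ∀ i, (F i).Finite) (hFA : ∀ i, F i ⊆ A i)
    (x : ℕ → T)
    (h1 : {n : ℕ | x n ∈ ⋃ i : ℕ, F i}.Infinite)
    (h2 : ∀ t : T, {n : ℕ | x n = t}.Finite) :
    ∀ i : ℕ, {n : ℕ | x n ∈ A i}.Infinite :=
  infinite_visits_of_good_general A hA F hFfin hFA x h1 h2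
end
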